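/- arXiv:math/0411336 — 4 statements merged into one kernel-verified Lean document; each statement's English description precedes it below -/
import Mathlib

section
/- Over a commutative ring k with invertible element q, in the algebra generated by l₁₁, l₁₂, l₂₁, l₂₂ subject to the six relations l₂₂l₁₂ = q²l₁₂l₂₂, l₁₁l₁₂ = l₁₂l₁₁ + (q⁻²−1)l₁₂l₂₂, l₁₁l₂₂ = l₂₂l₁₁, l₂₁l₁₂ = l₁₂l₂₁ + (q⁻²−1)l₂₂(l₂₂−l₁₁), l₂₁l₂₂ = q²l₂₂l₂₁, l₂₁l₁₁ = l₁₁l₂₁ + (q⁻²−1)l₂₂l₂₁, the element Tr_q(L) = q·l₁₁ + q⁻¹·l₂₂ is central. -/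
/-- In the 2×2 reflection equation algebra (realized by elements `l₁₁, l₁₂, l₂₁, l₂₂`
of an algebra `A` over a commutative ring `k` with invertible `q`, satisfying the six
defining relations), the quantum trace `Tr_q(L) = q·l₁₁ + q⁻¹·l₂₂` is central in the
algebra generated by the four generators. -/
theorem quantum_trace_central {k A : Type*} [CommRing k] [Ring A] [Algebra k A]
    (q : kˣ) (l11 l12 l21 l22 : A)
    (h1 : l22 * l12 = ((q : k) ^ 2) • (l12 * l22))
    (h2 : l11 * l12 = l12 * l11 + (((q⁻¹ : kˣ) : k) ^ 2 - 1) • (l12 * l22))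
    (h3 : l11 * l22 = l22 * l11)
    (h4 : l21 * l12 = l12 * l21 + (((q⁻¹ : kˣ) : k) ^ 2 - 1) • (l22 * (l22 - l11)))
    (h5 : l21 * l22 = ((q : k) ^ 2) • (l22 * l21))
    (h6 : l21 * l11 = l11 * l21 + (((q⁻¹ : kˣ) : k) ^ 2 - 1) • (l22 * l21)) :
    ∀ x ∈ Algebra.adjoin k ({l11, l12, l21, l22} : Set A),
      Commute ((q : k) • l11 + ((q⁻¹ : kˣ) : k) • l22) x := by
  set u : k := (q : k)
  set v : k := ((q⁻¹ : kˣ) : k)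
  have hv : u * v = 1 := by
    simp [u, v, ← Units.val_mul]
  intro x hx
  induction hx using Algebra.adjoin_induction with
  | mem y hy =>
    simp only [Set.mem_insert_iff, Set.mem_singleton_iff] at hy
    rcases hy with rfl | rfl | rfl | rfl
    · show _ = _
      simp only [add_mul, mul_add, smul_mul_assoc, mul_smul_comm, h3]
    · show _ = _
      simp only [add_mul, mul_add, smul_mul_assoc, mul_smul_comm, h1, h2, smul_add]
      match_scalars
      · ring
      · linear_combination (u + v) * hv
    · show _ = _
      simp only [add_mul, mul_add, smul_mul_assoc, mul_smul_comm, h5, h6, smul_add]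
      match_scalars
      · ring
      · linear_combination (-(u + v)) * hv
    · show _ = _
      simp only [add_mul, mul_add, smul_mul_assoc, mul_smul_comm, h3]
  | algebraMap r => exact (Algebra.commutes r _).symm
  | add _ _ _ _ ha hb => exact ha.add_right hb
  | mul _ _ _ _ ha hb => exact ha.mul_right hb
end

section
/- In the 2×2 reflection equation algebra with the six defining relations above, the element l₁₁l₂₂ − q²l₁₂l₂₁ is central. -/
/-- In the 2×2 reflection equation algebra (realized by elements `l₁₁, l₁₂, l₂₁, l₂₂`
of an algebra `A` over a commutative ring `k` with invertible `q`, satisfying the six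
defining relations), the quantum determinant `l₁₁l₂₂ − q²l₁₂l₂₁` is central in the
algebra generated by the four generators. -/
theorem quantum_determinant_central {k A : Type*} [CommRing k] [Ring A] [Algebra k A]
    (q : kˣ) (l11 l12 l21 l22 : A)
    (h1 : l22 * l12 = ((q : k) ^ 2) • (l12 * l22))
    (h2 : l11 * l12 = l12 * l11 + (((q⁻¹ : kˣ) : k) ^ 2 - 1) • (l12 * l22))
    (h3 : l11 * l22 = l22 * l11)
    (h4 : l21 * l12 = l12 * l21 + (((q⁻¹ : kˣ) : k) ^ 2 - 1) • (l22 * (l22 - l11)))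
    (h5 : l21 * l22 = ((q : k) ^ 2) • (l22 * l21))
    (h6 : l21 * l11 = l11 * l21 + (((q⁻¹ : kˣ) : k) ^ 2 - 1) • (l22 * l21)) :
    ∀ x ∈ Algebra.adjoin k ({l11, l12, l21, l22} : Set A),
      Commute (l11 * l22 - ((q : k) ^ 2) • (l12 * l21)) x := by
  have hq : ((q⁻¹ : kˣ) : k) * (q : k) = 1 := q.inv_mul
  -- relations in right-associated form
  have H1 : ∀ x : A, l22 * (l12 * x) = ((q : k) ^ 2) • (l12 * (l22 * x)) := by
    intro x; rw [← mul_assoc, h1, smul_mul_assoc, mul_assoc]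
  have H2 : ∀ x : A, l11 * (l12 * x) =
      l12 * (l11 * x) + (((q⁻¹ : kˣ) : k) ^ 2 - 1) • (l12 * (l22 * x)) := by
    intro x; rw [← mul_assoc, h2, add_mul, smul_mul_assoc, mul_assoc, mul_assoc]
  have H3 : ∀ x : A, l22 * (l11 * x) = l11 * (l22 * x) := by
    intro x; rw [← mul_assoc, ← h3, mul_assoc]
  have h4' : l21 * l12 = l12 * l21 + (((q⁻¹ : kˣ) : k) ^ 2 - 1) • (l22 * l22)
      - (((q⁻¹ : kˣ) : k) ^ 2 - 1) • (l11 * l22) := by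
    rw [h4, mul_sub, smul_sub, ← h3, add_sub_assoc]
  have H4 : ∀ x : A, l21 * (l12 * x) = l12 * (l21 * x)
      + (((q⁻¹ : kˣ) : k) ^ 2 - 1) • (l22 * (l22 * x))
      - (((q⁻¹ : kˣ) : k) ^ 2 - 1) • (l11 * (l22 * x)) := by
    intro x
    rw [← mul_assoc, h4', sub_mul, add_mul, smul_mul_assoc, smul_mul_assoc,
      mul_assoc, mul_assoc, mul_assoc]
  have H5 : ∀ x : A, l21 * (l22 * x) = ((q : k) ^ 2) • (l22 * (l21 * x)) := by
    intro x; rw [← mul_assoc, h5, smul_mul_assoc, mul_assoc]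
  have H6 : ∀ x : A, l21 * (l11 * x) =
      l11 * (l21 * x) + (((q⁻¹ : kˣ) : k) ^ 2 - 1) • (l22 * (l21 * x)) := by
    intro x; rw [← mul_assoc, h6, add_mul, smul_mul_assoc, mul_assoc, mul_assoc]
  set D : A := l11 * l22 - ((q : k) ^ 2) • (l12 * l21) with hD
  have c11 : Commute D l11 := by
    show D * l11 = l11 * D
    rw [hD]
    simp only [sub_mul, mul_sub, smul_mul_assoc, mul_smul_comm, mul_assoc,
      h1, h2, h3, h4, h5, h6, H1, H2, H3, H4, H5, H6, smul_smul, smul_sub, smul_add,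
      mul_add, add_mul, mul_sub, sub_mul]
    try match_scalars
    all_goals
      first
      | ring1
      | linear_combination hq
      | linear_combination (-1 : k) * hq
      | linear_combination ((q : k) * ((q⁻¹ : kˣ) : k)) * hq
      | linear_combination (-((q : k) * ((q⁻¹ : kˣ) : k))) * hq
      | linear_combination (((q : k) * ((q⁻¹ : kˣ) : k)) + 1) * hq
      | linear_combination (-((q : k) * ((q⁻¹ : kˣ) : k)) - 1) * hq
      | linear_combination (((q : k) * ((q⁻¹ : kˣ) : k)) + 2) * hq
      | linear_combination (-((q : k) * ((q⁻¹ : kˣ) : k)) - 2) * hq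
  have c12 : Commute D l12 := by
    show D * l12 = l12 * D
    rw [hD]
    simp only [sub_mul, mul_sub, smul_mul_assoc, mul_smul_comm, mul_assoc,
      h1, h2, h3, h4, h5, h6, H1, H2, H3, H4, H5, H6, smul_smul, smul_sub, smul_add,
      mul_add, add_mul, mul_sub, sub_mul]
    try match_scalars
    all_goals
      first
      | ring1
      | linear_combination hq
      | linear_combination (-1 : k) * hq
      | linear_combination ((q : k) * ((q⁻¹ : kˣ) : k)) * hq
      | linear_combination (-((q : k) * ((q⁻¹ : kˣ) : k))) * hq
      | linear_combination (((q : k) * ((q⁻¹ : kˣ) : k)) + 1) * hq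
      | linear_combination (-((q : k) * ((q⁻¹ : kˣ) : k)) - 1) * hq
      | linear_combination (((q : k) * ((q⁻¹ : kˣ) : k)) + 2) * hq
      | linear_combination (-((q : k) * ((q⁻¹ : kˣ) : k)) - 2) * hq
  have c21 : Commute D l21 := by
    show D * l21 = l21 * D
    rw [hD]
    simp only [sub_mul, mul_sub, smul_mul_assoc, mul_smul_comm, mul_assoc,
      h1, h2, h3, h4, h5, h6, H1, H2, H3, H4, H5, H6, smul_smul, smul_sub, smul_add,
      mul_add, add_mul, mul_sub, sub_mul]
    try match_scalars
    all_goals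
      first
      | ring1
      | linear_combination hq
      | linear_combination (-1 : k) * hq
      | linear_combination ((q : k) * ((q⁻¹ : kˣ) : k)) * hq
      | linear_combination (-((q : k) * ((q⁻¹ : kˣ) : k))) * hq
      | linear_combination (((q : k) * ((q⁻¹ : kˣ) : k)) + 1) * hq
      | linear_combination (-((q : k) * ((q⁻¹ : kˣ) : k)) - 1) * hq
      | linear_combination (((q : k) * ((q⁻¹ : kˣ) : k)) + 2) * hq
      | linear_combination (-((q : k) * ((q⁻¹ : kˣ) : k)) - 2) * hq
  have c22 : Commute D l22 := by
    show D * l22 = l22 * D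
    rw [hD]
    simp only [sub_mul, mul_sub, smul_mul_assoc, mul_smul_comm, mul_assoc,
      h1, h2, h3, h4, h5, h6, H1, H2, H3, H4, H5, H6, smul_smul, smul_sub, smul_add,
      mul_add, add_mul, mul_sub, sub_mul]
    try match_scalars
    all_goals
      first
      | ring1
      | linear_combination hq
      | linear_combination (-1 : k) * hq
      | linear_combination ((q : k) * ((q⁻¹ : kˣ) : k)) * hq
      | linear_combination (-((q : k) * ((q⁻¹ : kˣ) : k))) * hq
      | linear_combination (((q : k) * ((q⁻¹ : kˣ) : k)) + 1) * hq
      | linear_combination (-((q : k) * ((q⁻¹ : kˣ) : k)) - 1) * hq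
      | linear_combination (((q : k) * ((q⁻¹ : kˣ) : k)) + 2) * hq
      | linear_combination (-((q : k) * ((q⁻¹ : kˣ) : k)) - 2) * hq
  intro x hx
  induction hx using Algebra.adjoin_induction with
  | mem y hy =>
    rcases hy with rfl | rfl | rfl | rfl
    · exact c11
    · exact c12
    · exact c21
    · exact c22
  | algebraMap r => exact Algebra.commute_algebraMap_right r D
  | add y z _ _ hy hz => exact hy.add_right hz
  | mul y z _ _ hy hz => exact hy.mul_right hz
end

section
/- In the 2×2 reflection equation algebra, the identity l₁₁l₂₂ − q²l₁₂l₂₁ = (q+q⁻¹)⁻¹ (q·Tr_q(L)² − q²·Tr_q(L²)) holds, where Tr_q(L) = q l₁₁ + q⁻¹ l₂₂ and Tr_q(L²) = q(L²)₁₁ + q⁻¹(L²)₂₂ with (L²)ᵢⱼ = Σₛ lᵢₛ lₛⱼ. -/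
/-- In the 2×2 reflection equation algebra (elements `l₁₁, l₁₂, l₂₁, l₂₂` of an algebra
over a commutative ring `k` in which `q` and `q + q⁻¹` are invertible, satisfying the six
defining relations), one has
`l₁₁l₂₂ − q²l₁₂l₂₁ = (q+q⁻¹)⁻¹ (q·Tr_q(L)² − q²·Tr_q(L²))`,
where `Tr_q(L) = q l₁₁ + q⁻¹ l₂₂` and `Tr_q(L²) = q (L²)₁₁ + q⁻¹ (L²)₂₂` with
`(L²)ᵢⱼ = Σₛ lᵢₛ lₛⱼ`. -/
theorem quantum_determinant_eq_traces {k A : Type*} [CommRing k] [Ring A] [Algebra k A]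
    (q u : kˣ) (hu : (u : k) = (q : k) + ((q⁻¹ : kˣ) : k))
    (l11 l12 l21 l22 : A)
    (h1 : l22 * l12 = ((q : k) ^ 2) • (l12 * l22))
    (h2 : l11 * l12 = l12 * l11 + (((q⁻¹ : kˣ) : k) ^ 2 - 1) • (l12 * l22))
    (h3 : l11 * l22 = l22 * l11)
    (h4 : l21 * l12 = l12 * l21 + (((q⁻¹ : kˣ) : k) ^ 2 - 1) • (l22 * (l22 - l11)))
    (h5 : l21 * l22 = ((q : k) ^ 2) • (l22 * l21))
    (h6 : l21 * l11 = l11 * l21 + (((q⁻¹ : kˣ) : k) ^ 2 - 1) • (l22 * l21)) :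
    l11 * l22 - ((q : k) ^ 2) • (l12 * l21) =
      ((u⁻¹ : kˣ) : k) •
        ((q : k) • (((q : k) • l11 + ((q⁻¹ : kˣ) : k) • l22) *
            ((q : k) • l11 + ((q⁻¹ : kˣ) : k) • l22)) -
          ((q : k) ^ 2) •
            ((q : k) • (l11 * l11 + l12 * l21) +
              ((q⁻¹ : kˣ) : k) • (l21 * l12 + l22 * l22))) := by
  have hqi : (q : k) * ((q⁻¹ : kˣ) : k) = 1 := by
    rw [← Units.val_mul, mul_inv_cancel, Units.val_one]
  have key : ((q : k) • (((q : k) • l11 + ((q⁻¹ : kˣ) : k) • l22) *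
            ((q : k) • l11 + ((q⁻¹ : kˣ) : k) • l22)) -
          ((q : k) ^ 2) •
            ((q : k) • (l11 * l11 + l12 * l21) +
              ((q⁻¹ : kˣ) : k) • (l21 * l12 + l22 * l22)))
      = (u : k) • (l11 * l22 - ((q : k) ^ 2) • (l12 * l21)) := by
    simp only [hu, mul_sub, sub_mul, mul_add, add_mul, smul_add, smul_sub, smul_smul,
      mul_smul_comm, smul_mul_assoc, h3, h4]
    match_scalars <;>
      first
        | ring1
        | linear_combination ((q : k) + (q : k) * ((q⁻¹ : kˣ) : k) ^ 2 + ((q⁻¹ : kˣ) : k)) * hqi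
        | linear_combination (-((q : k) + (q : k) * ((q⁻¹ : kˣ) : k) ^ 2 + ((q⁻¹ : kˣ) : k))) * hqi
        | linear_combination ((q : k) * ((q⁻¹ : kˣ) : k) ^ 2) * hqi
        | linear_combination (-(q : k) * ((q⁻¹ : kˣ) : k) ^ 2) * hqi
  rw [key, smul_smul, Units.inv_mul, one_smul]
end

section
/- Setting q = 1 in the six defining relations of the 2×2 reflection equation algebra yields the commutative polynomial algebra on four generators; i.e., the quotient of L_q(M) (over K = ℂ[q]_{(q-1)}) by the ideal (q-1) is isomorphic to ℂ[l₁₁, l₁₂, l₂₁, l₂₂]. -/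
open Polynomial

noncomputable section

/-- The maximal ideal `(q - 1)` of `ℂ[q]`. -/
abbrev Kideal : Ideal (Polynomial ℂ) := Ideal.span {X - C 1}

instance : Kideal.IsPrime :=
  (Ideal.span_singleton_prime (X_sub_C_ne_zero 1)).mpr (prime_X_sub_C 1)

/-- `K = ℂ[q]_{(q-1)}`. -/
abbrev Kq := Localization.AtPrime Kideal

/-- The image of `q` in `K`. -/
abbrev qK : Kq := algebraMap (Polynomial ℂ) Kq X

lemma X_not_mem_Kideal : X ∉ Kideal := by
  intro h
  rw [Ideal.mem_span_singleton] at h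
  obtain ⟨c, hc⟩ := h
  have := congrArg (eval 1) hc
  simp at this

/-- `q` is invertible in `K`. -/
abbrev qKu : Kqˣ :=
  (IsLocalization.map_units (M := Kideal.primeCompl) Kq ⟨X, X_not_mem_Kideal⟩).unit

/-- The inverse `q⁻¹` in `K`. -/
abbrev qKinv : Kq := ((qKu⁻¹ : Kqˣ) : Kq)

/-- The six defining relations of the 2×2 reflection equation algebra `L_q(M)`
(generators indexed by `Fin 4`: `0 ↦ l₁₁`, `1 ↦ l₁₂`, `2 ↦ l₂₁`, `3 ↦ l₂₂`). -/
inductive ReflRel : FreeAlgebra Kq (Fin 4) → FreeAlgebra Kq (Fin 4) → Prop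
  | r1 : ReflRel (FreeAlgebra.ι Kq 3 * FreeAlgebra.ι Kq 1)
      ((qK ^ 2) • (FreeAlgebra.ι Kq 1 * FreeAlgebra.ι Kq 3))
  | r2 : ReflRel (FreeAlgebra.ι Kq 0 * FreeAlgebra.ι Kq 1)
      (FreeAlgebra.ι Kq 1 * FreeAlgebra.ι Kq 0 +
        (qKinv ^ 2 - 1) • (FreeAlgebra.ι Kq 1 * FreeAlgebra.ι Kq 3))
  | r3 : ReflRel (FreeAlgebra.ι Kq 0 * FreeAlgebra.ι Kq 3)
      (FreeAlgebra.ι Kq 3 * FreeAlgebra.ι Kq 0)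
  | r4 : ReflRel (FreeAlgebra.ι Kq 2 * FreeAlgebra.ι Kq 1)
      (FreeAlgebra.ι Kq 1 * FreeAlgebra.ι Kq 2 +
        (qKinv ^ 2 - 1) •
          (FreeAlgebra.ι Kq 3 * (FreeAlgebra.ι Kq 3 - FreeAlgebra.ι Kq 0)))
  | r5 : ReflRel (FreeAlgebra.ι Kq 2 * FreeAlgebra.ι Kq 3)
      ((qK ^ 2) • (FreeAlgebra.ι Kq 3 * FreeAlgebra.ι Kq 2))
  | r6 : ReflRel (FreeAlgebra.ι Kq 2 * FreeAlgebra.ι Kq 0)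
      (FreeAlgebra.ι Kq 0 * FreeAlgebra.ι Kq 2 +
        (qKinv ^ 2 - 1) • (FreeAlgebra.ι Kq 3 * FreeAlgebra.ι Kq 2))

/-- The 2×2 reflection equation algebra `L_q(M)` over `K = ℂ[q]_{(q-1)}`. -/
abbrev LqM := RingQuot ReflRel

/-- The generators `lᵢⱼ` of `L_q(M)`. -/
abbrev lgen (i : Fin 4) : LqM := RingQuot.mkAlgHom Kq ReflRel (FreeAlgebra.ι Kq i)

/-- The relation identifying `q - 1` with `0`, i.e. cutting out the two-sided ideal
`(q-1)·L_q(M)`. -/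
def QuotRel : LqM → LqM → Prop := fun a b =>
  a = algebraMap Kq LqM (qK - 1) ∧ b = 0

-- ===== auxiliary development =====

set_option maxSynthPendingDepth 5

/-- Evaluation at `q = 1`, `K → ℂ`. -/
def evK : Kq →+* ℂ :=
  IsLocalization.lift (M := Kideal.primeCompl) (S := Kq) (g := evalRingHom 1) (by
    rintro ⟨s, hs⟩
    rw [isUnit_iff_ne_zero]
    intro h0
    exact hs (Ideal.mem_span_singleton.mpr (dvd_iff_isRoot.mpr h0)))

@[simp] lemma evK_algebraMap (p : Polynomial ℂ) :
    evK (algebraMap (Polynomial ℂ) Kq p) = eval 1 p :=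
  IsLocalization.lift_eq _ _

@[simp] lemma evK_qK : evK qK = 1 := by simp

lemma qK_mul_qKinv : qK * qKinv = 1 := by
  simp

@[simp] lemma evK_qKinv : evK qKinv = 1 := by
  have h := congrArg evK qK_mul_qKinv
  rw [map_mul, map_one, evK_qK, one_mul] at h
  exact h

/-- The `Kq`-algebra structure on `MvPolynomial (Fin 4) ℂ` via `q = 1`. -/
noncomputable instance mvAlg : Algebra Kq (MvPolynomial (Fin 4) ℂ) :=
  ((MvPolynomial.C : ℂ →+* MvPolynomial (Fin 4) ℂ).comp evK).toAlgebra

lemma mv_algebraMap (c : Kq) :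
    algebraMap Kq (MvPolynomial (Fin 4) ℂ) c = MvPolynomial.C (evK c) := rfl

/-- The map from the free algebra to the polynomial ring. -/
def phiFree : FreeAlgebra Kq (Fin 4) →ₐ[Kq] MvPolynomial (Fin 4) ℂ :=
  FreeAlgebra.lift Kq (fun i => MvPolynomial.X i)

@[simp] lemma phiFree_ι (i : Fin 4) : phiFree (FreeAlgebra.ι Kq i) = MvPolynomial.X i :=
  FreeAlgebra.lift_ι_apply _ _

lemma phiFree_rel : ∀ ⦃a b⦄, ReflRel a b → phiFree a = phiFree b := by
  intro a b h
  cases h <;>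
    simp only [map_mul, map_add, map_sub, map_smul, Algebra.smul_def, AlgHom.commutes,
      mv_algebraMap, map_pow, map_one, evK_qK, evK_qKinv, one_pow, sub_self,
      MvPolynomial.C_0, MvPolynomial.C_1, phiFree_ι, zero_mul, add_zero, one_mul] <;>
    ring

/-- The induced map `L_q(M) → ℂ[l]`. -/
def phiL : LqM →ₐ[Kq] MvPolynomial (Fin 4) ℂ :=
  RingQuot.liftAlgHom Kq ⟨phiFree, phiFree_rel⟩

lemma phiL_quotrel : ∀ ⦃a b⦄, QuotRel a b → phiL a = phiL b := by
  rintro a b ⟨rfl, rfl⟩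
  rw [map_zero, AlgHom.commutes, mv_algebraMap]
  simp

/-- The induced map `L_q(M)/(q-1) → ℂ[l]`. -/
def phiA : RingQuot QuotRel →ₐ[Kq] MvPolynomial (Fin 4) ℂ :=
  RingQuot.liftAlgHom Kq ⟨phiL, phiL_quotrel⟩

/-- The projection from the free algebra to `L_q(M)/(q-1)`. -/
def piA : FreeAlgebra Kq (Fin 4) →ₐ[Kq] RingQuot QuotRel :=
  (RingQuot.mkAlgHom Kq QuotRel).comp (RingQuot.mkAlgHom Kq ReflRel)

lemma piA_surjective : Function.Surjective piA :=
  (RingQuot.mkAlgHom_surjective Kq QuotRel).comp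
    (RingQuot.mkAlgHom_surjective Kq ReflRel)

lemma qK_sub_one_zero : algebraMap Kq (RingQuot QuotRel) (qK - 1) = 0 := by
  have h := RingQuot.mkAlgHom_rel Kq (s := QuotRel)
    (x := algebraMap Kq LqM (qK - 1)) (y := 0) ⟨rfl, rfl⟩
  rwa [AlgHom.commutes, map_zero] at h

lemma hq1 : algebraMap Kq (RingQuot QuotRel) qK = 1 := by
  have h := qK_sub_one_zero
  rwa [map_sub, map_one, sub_eq_zero] at h

lemma hqinv1 : algebraMap Kq (RingQuot QuotRel) qKinv = 1 := by
  have h := congrArg (algebraMap Kq (RingQuot QuotRel)) qK_mul_qKinv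
  rwa [map_mul, map_one, hq1, one_mul] at h

lemma piA_rel {a b : FreeAlgebra Kq (Fin 4)} (h : ReflRel a b) : piA a = piA b := by
  simp only [piA, AlgHom.comp_apply, RingQuot.mkAlgHom_rel Kq h]

lemma comm_gen (i j : Fin 4) :
    Commute (piA (FreeAlgebra.ι Kq i)) (piA (FreeAlgebra.ι Kq j)) := by
  have e1 := piA_rel ReflRel.r1
  have e2 := piA_rel ReflRel.r2
  have e3 := piA_rel ReflRel.r3
  have e4 := piA_rel ReflRel.r4
  have e5 := piA_rel ReflRel.r5
  have e6 := piA_rel ReflRel.r6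
  simp only [map_mul, map_add, map_sub, map_smul, Algebra.smul_def, AlgHom.commutes,
    map_pow, map_one, hq1, hqinv1, one_pow, sub_self, zero_mul,
    add_zero, one_mul] at e1 e2 e3 e4 e5 e6
  fin_cases i <;> fin_cases j <;>
    first
      | exact Commute.refl _
      | exact e1 | exact e1.symm
      | exact e2 | exact e2.symm
      | exact e3 | exact e3.symm
      | exact e4 | exact e4.symm
      | exact e5 | exact e5.symm
      | exact e6 | exact e6.symm

lemma comm_all (a b : FreeAlgebra Kq (Fin 4)) : Commute (piA a) (piA b) := by
  induction a using FreeAlgebra.induction with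
  | grade0 r =>
    rw [AlgHom.commutes]
    exact Algebra.commute_algebraMap_left r _
  | grade1 i =>
    induction b using FreeAlgebra.induction with
    | grade0 r =>
      rw [AlgHom.commutes]
      exact Algebra.commute_algebraMap_right r _
    | grade1 j => exact comm_gen i j
    | mul x y hx hy => rw [map_mul]; exact hx.mul_right hy
    | add x y hx hy => rw [map_add]; exact hx.add_right hy
  | mul x y hx hy => rw [map_mul]; exact hx.mul_left hy
  | add x y hx hy => rw [map_add]; exact hx.add_left hy

noncomputable instance : CommRing (RingQuot QuotRel) :=
  { (inferInstance : Ring (RingQuot QuotRel)) with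
    mul_comm := by
      intro x y
      obtain ⟨a, rfl⟩ := piA_surjective x
      obtain ⟨b, rfl⟩ := piA_surjective y
      exact comm_all a b }

lemma zero_of_evK_zero {d : Kq} (hd : evK d = 0) :
    algebraMap Kq (RingQuot QuotRel) d = 0 := by
  obtain ⟨⟨p, s⟩, h⟩ := IsLocalization.surj (M := Kideal.primeCompl) (S := Kq) d
  have hp : eval 1 p = 0 := by
    have h1 := congrArg evK h
    rw [map_mul, hd, zero_mul] at h1
    simpa using h1.symm
  obtain ⟨p₁, rfl⟩ := dvd_iff_isRoot.mpr hp
  have h2 := congrArg (algebraMap Kq (RingQuot QuotRel)) h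
  simp only [map_mul, map_sub, map_one, hq1, sub_self, zero_mul] at h2
  have hu : IsUnit (algebraMap Kq (RingQuot QuotRel)
      (algebraMap (Polynomial ℂ) Kq (s : Polynomial ℂ))) :=
    (IsLocalization.map_units (M := Kideal.primeCompl) Kq s).map _
  exact (hu.mul_left_eq_zero).mp h2

lemma algebraMap_factor (c : Kq) :
    algebraMap Kq (RingQuot QuotRel) c
      = algebraMap Kq (RingQuot QuotRel) (algebraMap (Polynomial ℂ) Kq (C (evK c))) := by
  have hd : evK (c - algebraMap (Polynomial ℂ) Kq (C (evK c))) = 0 := by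
    rw [map_sub, evK_algebraMap, eval_C, sub_self]
  have h := zero_of_evK_zero hd
  rw [map_sub, sub_eq_zero] at h
  exact h

/-- `ℂ[l] → L_q(M)/(q-1)`. -/
noncomputable def psi : MvPolynomial (Fin 4) ℂ →+* RingQuot QuotRel :=
  MvPolynomial.eval₂Hom
    ((algebraMap Kq (RingQuot QuotRel)).comp
      ((algebraMap (Polynomial ℂ) Kq).comp (C : ℂ →+* Polynomial ℂ)))
    (fun i => piA (FreeAlgebra.ι Kq i))

@[simp] lemma psi_C (c : ℂ) :
    psi (MvPolynomial.C c)
      = algebraMap Kq (RingQuot QuotRel) (algebraMap (Polynomial ℂ) Kq (C c)) := by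
  simp [psi]

@[simp] lemma psi_X (i : Fin 4) :
    psi (MvPolynomial.X i) = piA (FreeAlgebra.ι Kq i) := by
  simp [psi]

lemma phi_pi (x : FreeAlgebra Kq (Fin 4)) : phiA (piA x) = phiFree x := by
  simp only [piA, phiA, phiL, AlgHom.comp_apply, RingQuot.liftAlgHom_mkAlgHom_apply]

lemma psi_phiFree (x : FreeAlgebra Kq (Fin 4)) : psi (phiFree x) = piA x := by
  induction x using FreeAlgebra.induction with
  | grade0 c =>
    rw [AlgHom.commutes, AlgHom.commutes, mv_algebraMap, psi_C, ← algebraMap_factor]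
  | grade1 i => rw [phiFree_ι, psi_X]
  | mul a b ha hb => rw [map_mul, map_mul, map_mul, ha, hb]
  | add a b ha hb => rw [map_add, map_add, map_add, ha, hb]

lemma comp1 : (phiA.toRingHom).comp psi = RingHom.id (MvPolynomial (Fin 4) ℂ) := by
  apply MvPolynomial.ringHom_ext
  · intro c
    simp only [RingHom.comp_apply, RingHom.id_apply, psi_C, AlgHom.toRingHom_eq_coe,
      RingHom.coe_coe, AlgHom.commutes, mv_algebraMap, evK_algebraMap, eval_C]
  · intro i
    simp only [RingHom.comp_apply, RingHom.id_apply, psi_X, AlgHom.toRingHom_eq_coe,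
      RingHom.coe_coe, phi_pi, phiFree_ι]

lemma mk_mk_eq_piA (y : FreeAlgebra Kq (Fin 4)) :
    RingQuot.mkRingHom QuotRel (RingQuot.mkRingHom ReflRel y) = piA y := by
  rw [← RingQuot.mkAlgHom_coe Kq QuotRel, ← RingQuot.mkAlgHom_coe Kq ReflRel]
  rfl

lemma comp2 : psi.comp (phiA.toRingHom) = RingHom.id (RingQuot QuotRel) := by
  apply RingQuot.ringQuot_ext
  apply RingQuot.ringQuot_ext
  apply RingHom.ext
  intro x
  simp only [RingHom.comp_apply, mk_mk_eq_piA, RingHom.id_apply,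
    AlgHom.toRingHom_eq_coe, RingHom.coe_coe, phi_pi, psi_phiFree]
/-- Setting `q = 1` in the six defining relations of the 2×2 reflection equation algebra
yields the commutative polynomial algebra on four generators: the quotient of `L_q(M)`
(over `K = ℂ[q]_{(q-1)}`) modulo the ideal `(q-1)` is isomorphic to
`ℂ[l₁₁, l₁₂, l₂₁, l₂₂]`, with the class of each generator corresponding to the
matching polynomial variable. -/
theorem reflection_algebra_classical_limit :
    ∃ e : RingQuot QuotRel ≃+* MvPolynomial (Fin 4) ℂ,
      ∀ i : Fin 4, e (RingQuot.mkRingHom QuotRel (lgen i)) = MvPolynomial.X i := by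
  refine ⟨RingEquiv.ofRingHom phiA.toRingHom psi comp1 comp2, ?_⟩
  intro i
  have h : RingQuot.mkRingHom QuotRel (lgen i) = piA (FreeAlgebra.ι Kq i) := by
    rw [← RingQuot.mkAlgHom_coe Kq QuotRel]
    rfl
  simp only [h, RingEquiv.ofRingHom_apply, AlgHom.toRingHom_eq_coe, RingHom.coe_coe,
    phi_pi, phiFree_ι]
end
end
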